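/- arXiv:2603.05533 — 3 statements merged into one kernel-verified Lean document; each statement's English description precedes it below -/
import Mathlib

section
/- Let u = (u₁,u₂,u₃) : ℝ³ → ℝ³ be a smooth displacement field. Then u satisfies the six isotropic universality constraints — (i) ∂²u₁/∂x₃² + ∂²u₁/∂x₂² + ∂²u₃/∂x₁∂x₃ + ∂²u₂/∂x₁∂x₂ + 2∂²u₁/∂x₁² = 0; (ii) −∂²u₁/∂x₃² − ∂²u₁/∂x₂² + ∂²u₃/∂x₁∂x₃ + ∂²u₂/∂x₁∂x₂ = 0; (iii) ∂²u₂/∂x₃² + ∂²u₃/∂x₂∂x₃ + 2∂²u₂/∂x₂² + ∂²u₁/∂x₁∂x₂ + ∂²u₂/∂x₁² = 0; (iv) −∂²u₂/∂x₃² + ∂²u₃/∂x₂∂x₃ + ∂²u₁/∂x₁∂x₂ − ∂²u₂/∂x₁² = 0; (v) 2∂²u₃/∂x₃² + ∂²u₂/∂x₂∂x₃ + ∂²u₃/∂x₂² + ∂²u₁/∂x₁∂x₃ + ∂²u₃/∂x₁² = 0; (vi) ∂²u₂/∂x₂∂x₃ − ∂²u₃/∂x₂² + ∂²u₁/∂x₁∂x₃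 − ∂²u₃/∂x₁² = 0, all identically on ℝ³ — if and only if Δu = 0 and grad(div u) = 0, i.e., ∂²uᵢ/∂x₁² + ∂²uᵢ/∂x₂² + ∂²uᵢ/∂x₃² = 0 for each i ∈ {1,2,3} and ∂/∂xⱼ(∂u₁/∂x₁ + ∂u₂/∂x₂ + ∂u₃/∂x₃) = 0 for each j ∈ {1,2,3}. -/
/-- Partial derivative of a scalar field on `ℝ³` in the `j`-th coordinate direction. -/
noncomputable def pd (j : Fin 3) (f : (Fin 3 → ℝ) → ℝ) : (Fin 3 → ℝ) → ℝ :=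
  fun x => fderiv ℝ f x (Pi.single j 1)

/-- The `i`-th component of a vector field on `ℝ³`. -/
def comp (u : (Fin 3 → ℝ) → Fin 3 → ℝ) (i : Fin 3) : (Fin 3 → ℝ) → ℝ :=
  fun x => u x i

/-- Second partial derivative `∂²uᵢ/∂xⱼ∂xₖ` of the `i`-th component of `u`. -/
noncomputable def pdd (j k : Fin 3) (u : (Fin 3 → ℝ) → Fin 3 → ℝ) (i : Fin 3) :
    (Fin 3 → ℝ) → ℝ :=
  pd j (pd k (comp u i))

/-- The divergence of a vector field on `ℝ³`. -/
noncomputable def diverg (u : (Fin 3 → ℝ) → Fin 3 → ℝ) : (Fin 3 → ℝ) → ℝ :=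
  fun x => pd 0 (comp u 0) x + pd 1 (comp u 1) x + pd 2 (comp u 2) x

theorem pd_contDiff (f : (Fin 3 → ℝ) → ℝ) (hf : ContDiff ℝ (⊤ : ℕ∞) f) (k : Fin 3) :
    ContDiff ℝ (⊤ : ℕ∞) (pd k f) := by
  have := (ContinuousLinearMap.apply ℝ ℝ ((Pi.single k 1 : Fin 3 → ℝ))).contDiff.comp
    (hf.fderiv_right (le_of_eq ENat.coe_top_add_one))
  exact this

theorem pdswap (f : (Fin 3 → ℝ) → ℝ) (hf : ContDiff ℝ (⊤ : ℕ∞) f) (j k : Fin 3) (x : Fin 3 → ℝ) :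
    fderiv ℝ (fun y => fderiv ℝ f y (Pi.single k 1)) x (Pi.single j 1)
      = fderiv ℝ (fderiv ℝ f) x (Pi.single j 1) (Pi.single k 1) := by
  have h : (fun y => fderiv ℝ f y (Pi.single k 1))
      = (ContinuousLinearMap.apply ℝ ℝ ((Pi.single k 1 : Fin 3 → ℝ))) ∘ (fderiv ℝ f) := rfl
  rw [h, fderiv_comp x (ContinuousLinearMap.apply ℝ ℝ ((Pi.single k 1 : Fin 3 → ℝ))).differentiableAt
    (((hf.fderiv_right (le_of_eq ENat.coe_top_add_one)).differentiable
      (by simp)).differentiableAt)]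
  simp

theorem symmpd (f : (Fin 3 → ℝ) → ℝ) (hf : ContDiff ℝ (⊤ : ℕ∞) f) (j k : Fin 3) (x : Fin 3 → ℝ) :
    pd j (pd k f) x = pd k (pd j f) x := by
  show fderiv ℝ (fun y => fderiv ℝ f y (Pi.single k 1)) x (Pi.single j 1)
      = fderiv ℝ (fun y => fderiv ℝ f y (Pi.single j 1)) x (Pi.single k 1)
  rw [pdswap f hf j k, pdswap f hf k j]
  exact (hf.contDiffAt.isSymmSndFDerivAt
    (by rw [minSmoothness_of_isRCLikeNormedField]; exact ENat.natCast_le_of_coe_top_le_withTop le_rfl 2)) _ _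

theorem comp_contDiff (u : (Fin 3 → ℝ) → Fin 3 → ℝ) (hu : ContDiff ℝ (⊤ : ℕ∞) u) (i : Fin 3) :
    ContDiff ℝ (⊤ : ℕ∞) (comp u i) := by
  have := (ContinuousLinearMap.proj (R := ℝ) (φ := fun _ : Fin 3 => ℝ) i).contDiff.comp hu
  exact this

theorem pdd_symm (u : (Fin 3 → ℝ) → Fin 3 → ℝ) (hu : ContDiff ℝ (⊤ : ℕ∞) u)
    (i j k : Fin 3) (x : Fin 3 → ℝ) : pdd j k u i x = pdd k j u i x :=
  symmpd (comp u i) (comp_contDiff u hu i) j k x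

theorem pd_diverg (u : (Fin 3 → ℝ) → Fin 3 → ℝ) (hu : ContDiff ℝ (⊤ : ℕ∞) u)
    (j : Fin 3) (x : Fin 3 → ℝ) :
    pd j (diverg u) x = pdd j 0 u 0 x + pdd j 1 u 1 x + pdd j 2 u 2 x := by
  have d : ∀ k : Fin 3, DifferentiableAt ℝ (pd k (comp u k)) x := fun k =>
    ((pd_contDiff _ (comp_contDiff u hu k) k).differentiable
      (by simp)).differentiableAt
  show fderiv ℝ (fun y => pd 0 (comp u 0) y + pd 1 (comp u 1) y + pd 2 (comp u 2) y) x
      (Pi.single j 1) = _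
  rw [fderiv_fun_add ((d 0).fun_add (d 1)) (d 2), fderiv_fun_add (d 0) (d 1)]
  simp [pdd, pd]

/-- A smooth displacement field `u : ℝ³ → ℝ³` satisfies the six isotropic universality
constraints if and only if `Δu = 0` and `grad (div u) = 0`. -/
theorem isotropic_universality_constraints
    (u : (Fin 3 → ℝ) → Fin 3 → ℝ) (hu : ContDiff ℝ (⊤ : ℕ∞) u) :
    ((∀ x, pdd 2 2 u 0 x + pdd 1 1 u 0 x + pdd 0 2 u 2 x + pdd 0 1 u 1 x
        + 2 * pdd 0 0 u 0 x = 0) ∧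
     (∀ x, -pdd 2 2 u 0 x - pdd 1 1 u 0 x + pdd 0 2 u 2 x + pdd 0 1 u 1 x = 0) ∧
     (∀ x, pdd 2 2 u 1 x + pdd 1 2 u 2 x + 2 * pdd 1 1 u 1 x + pdd 0 1 u 0 x
        + pdd 0 0 u 1 x = 0) ∧
     (∀ x, -pdd 2 2 u 1 x + pdd 1 2 u 2 x + pdd 0 1 u 0 x - pdd 0 0 u 1 x = 0) ∧
     (∀ x, 2 * pdd 2 2 u 2 x + pdd 1 2 u 1 x + pdd 1 1 u 2 x + pdd 0 2 u 0 x
        + pdd 0 0 u 2 x = 0) ∧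
     (∀ x, pdd 1 2 u 1 x - pdd 1 1 u 2 x + pdd 0 2 u 0 x - pdd 0 0 u 2 x = 0)) ↔
    ((∀ i : Fin 3, ∀ x, pdd 0 0 u i x + pdd 1 1 u i x + pdd 2 2 u i x = 0) ∧
     (∀ j : Fin 3, ∀ x, pd j (diverg u) x = 0)) := by
  have hsym := pdd_symm u hu
  have hdiv := pd_diverg u hu
  constructor
  · rintro ⟨h1, h2, h3, h4, h5, h6⟩
    constructor
    · intro i
      fin_cases i <;> intro x
      · show pdd 0 0 u 0 x + pdd 1 1 u 0 x + pdd 2 2 u 0 x = 0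
        linarith [h1 x, h2 x]
      · show pdd 0 0 u 1 x + pdd 1 1 u 1 x + pdd 2 2 u 1 x = 0
        linarith [h3 x, h4 x]
      · show pdd 0 0 u 2 x + pdd 1 1 u 2 x + pdd 2 2 u 2 x = 0
        linarith [h5 x, h6 x]
    · intro j
      fin_cases j <;> intro x <;> rw [hdiv]
      · show pdd 0 0 u 0 x + pdd 0 1 u 1 x + pdd 0 2 u 2 x = 0
        linarith [h1 x, h2 x]
      · show pdd 1 0 u 0 x + pdd 1 1 u 1 x + pdd 1 2 u 2 x = 0
        linarith [h3 x, h4 x, hsym 0 0 1 x]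
      · show pdd 2 0 u 0 x + pdd 2 1 u 1 x + pdd 2 2 u 2 x = 0
        linarith [h5 x, h6 x, hsym 1 1 2 x, hsym 0 0 2 x]
  · rintro ⟨hA, hG⟩
    have g : ∀ j : Fin 3, ∀ x, pdd j 0 u 0 x + pdd j 1 u 1 x + pdd j 2 u 2 x = 0 := by
      intro j x
      have := hG j x
      rw [hdiv] at this
      exact this
    refine ⟨fun x => ?_, fun x => ?_, fun x => ?_, fun x => ?_, fun x => ?_, fun x => ?_⟩
    · linarith [hA 0 x, g 0 x]
    · linarith [hA 0 x, g 0 x]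
    · linarith [hA 1 x, g 1 x, hsym 0 0 1 x]
    · linarith [hA 1 x, g 1 x, hsym 0 0 1 x]
    · linarith [hA 2 x, g 2 x, hsym 1 1 2 x, hsym 0 0 2 x]
    · linarith [hA 2 x, g 2 x, hsym 1 1 2 x, hsym 0 0 2 x]
end

section
/- Let u = (u₁,u₂,u₃) : ℝ³ → ℝ³ be a smooth displacement field. Then u satisfies the tetragonal universality constraints — ∂²u₁/∂x₁² = ∂²u₁/∂x₁∂x₂ = ∂²u₁/∂x₂² = ∂²u₁/∂x₃² = 0; ∂²u₂/∂x₁∂x₂ = ∂²u₂/∂x₂² = ∂²u₂/∂x₁² = ∂²u₂/∂x₃² = 0; ∂²u₁/∂x₁∂x₃ + ∂²u₂/∂x₂∂x₃ = 0; ∂²u₃/∂x₁∂x₃ = ∂²u₃/∂x₂∂x₃ = ∂²u₃/∂x₃² = 0; ∂²u₃/∂x₁² + ∂²u₃/∂x₂² = 0 — together with the additional strain-gradient constraints ∂³u₃/∂x₁³ = ∂³u₃/∂x₁²∂x₂ = ∂³u₃/∂x₁∂x₂² = ∂³u₃/∂x₂³ = 0, all identically on ℝ³, if and only if there exist a constant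 real 3×3 matrix A, a vector b ∈ ℝ³, and constants c₁, c₂, c₃, c₄, c₅ ∈ ℝ such that u(x) = A x + b + (c₁ x₂x₃ + c₂ x₁x₃, −c₂ x₂x₃ + c₃ x₁x₃, c₄ x₁x₂ + c₅(x₂² − x₁²)) for all x ∈ ℝ³. (This is the characterization of universal displacements for the strain-gradient classes ℤ₄⁻, 𝔻₄ʰ, 𝔻₄ᵛ, ℤ₄ and 𝔻₄.) -/
lemma eq_of_pd_zero {f : (Fin 3 → ℝ) → ℝ} (hf : Differentiable ℝ f)
    (h : ∀ j x, pd j f x = 0) (x : Fin 3 → ℝ) : f x = f 0 := by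
  apply is_const_of_fderiv_eq_zero hf _ x 0
  intro y
  ext v
  have hv : v = ∑ j : Fin 3, v j • (Pi.single j 1 : Fin 3 → ℝ) := by
    funext k
    simp [Fin.sum_univ_three, Pi.single_apply]
  conv_lhs => rw [hv]
  rw [map_sum]
  simp only [map_smul]
  have : ∀ j : Fin 3, fderiv ℝ f y (Pi.single j 1) = 0 := fun j => h j y
  simp [this]

lemma pd_add {f g : (Fin 3 → ℝ) → ℝ} (hf : Differentiable ℝ f) (hg : Differentiable ℝ g) (j : Fin 3) :
    pd j (fun x => f x + g x) = fun x => pd j f x + pd j g x := by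
  funext x; unfold pd; rw [fderiv_fun_add (hf x) (hg x)]; rfl

lemma pd_sub {f g : (Fin 3 → ℝ) → ℝ} (hf : Differentiable ℝ f) (hg : Differentiable ℝ g) (j : Fin 3) :
    pd j (fun x => f x - g x) = fun x => pd j f x - pd j g x := by
  funext x; unfold pd; rw [fderiv_fun_sub (hf x) (hg x)]; rfl

lemma pd_const (j : Fin 3) (c : ℝ) : pd j (fun _ => c) = fun _ => 0 := by
  funext x; unfold pd; rw [fderiv_fun_const]; rfl

lemma pd_const_mul {f : (Fin 3 → ℝ) → ℝ} (hf : Differentiable ℝ f) (j : Fin 3) (c : ℝ) :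
    pd j (fun x => c * f x) = fun x => c * pd j f x := by
  funext x; unfold pd; rw [fderiv_const_mul (hf x)]; rfl

lemma pd_mul {f g : (Fin 3 → ℝ) → ℝ} (hf : Differentiable ℝ f) (hg : Differentiable ℝ g) (j : Fin 3) :
    pd j (fun x => f x * g x) = fun x => pd j f x * g x + f x * pd j g x := by
  funext x; unfold pd; rw [fderiv_fun_mul (hf x) (hg x)]; simp; ring

lemma pd_proj (j i : Fin 3) : pd j (fun x : Fin 3 → ℝ => x i) = fun _ => (Pi.single j 1 : Fin 3 → ℝ) i := by
  funext x; unfold pd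
  rw [show (fun x : Fin 3 → ℝ => x i) = ⇑(ContinuousLinearMap.proj (R := ℝ) (φ := fun _ : Fin 3 => ℝ) i) from rfl,
     ContinuousLinearMap.fderiv]
  rfl


lemma contDiff_pd {f : (Fin 3 → ℝ) → ℝ} (hf : ContDiff ℝ (⊤:ℕ∞) f) (j : Fin 3) :
    ContDiff ℝ (⊤:ℕ∞) (pd j f) := by
  have h1 : ContDiff ℝ (⊤:ℕ∞) (fderiv ℝ f) := hf.fderiv_right (by exact_mod_cast le_top)
  exact (ContinuousLinearMap.apply ℝ ℝ (Pi.single j 1)).contDiff.comp h1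

lemma fderiv2_pd {f : (Fin 3 → ℝ) → ℝ} (hf : ContDiff ℝ (⊤:ℕ∞) f) (j k : Fin 3) (x : Fin 3 → ℝ) :
    pd j (pd k f) x = fderiv ℝ (fderiv ℝ f) x (Pi.single j 1) (Pi.single k 1) := by
  have h1 : ContDiff ℝ (⊤:ℕ∞) (fderiv ℝ f) := hf.fderiv_right (by exact_mod_cast le_top)
  have hdf : DifferentiableAt ℝ (fderiv ℝ f) x := h1.differentiable (by simp) x
  show fderiv ℝ (fun y => (fderiv ℝ f y) (Pi.single k 1)) x (Pi.single j 1) = _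
  rw [fderiv_clm_apply hdf (differentiableAt_const _)]
  simp

lemma pd_comm {f : (Fin 3 → ℝ) → ℝ} (hf : ContDiff ℝ (⊤:ℕ∞) f) (j k : Fin 3) :
    pd j (pd k f) = pd k (pd j f) := by
  funext x
  rw [fderiv2_pd hf, fderiv2_pd hf]
  have h1 : ContDiff ℝ (⊤:ℕ∞) (fderiv ℝ f) := hf.fderiv_right (by exact_mod_cast le_top)
  exact second_derivative_symmetric
    (fun y => (hf.differentiable (by simp) y).hasFDerivAt)
    (h1.differentiable (by simp) x).hasFDerivAt _ _

lemma diff_of_contDiff {f : (Fin 3 → ℝ) → ℝ} (hf : ContDiff ℝ (⊤:ℕ∞) f) :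
    Differentiable ℝ f := hf.differentiable (by simp)

lemma all3 {P : Fin 3 → Prop} (h0 : P 0) (h1 : P 1) (h2 : P 2) : ∀ j, P j := by
  intro j; fin_cases j <;> assumption

lemma rep0 {f : (Fin 3 → ℝ) → ℝ} (hf : ContDiff ℝ (⊤:ℕ∞) f)
    (h00 : ∀ x, pd 0 (pd 0 f) x = 0) (h01 : ∀ x, pd 0 (pd 1 f) x = 0)
    (h11 : ∀ x, pd 1 (pd 1 f) x = 0) (h22 : ∀ x, pd 2 (pd 2 f) x = 0) :
    ∀ x, f x = f 0 + pd 0 f 0 * x 0 + pd 1 f 0 * x 1 + pd 2 f 0 * x 2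
      + pd 0 (pd 2 f) 0 * (x 0 * x 2) + pd 1 (pd 2 f) 0 * (x 1 * x 2) := by
  have hfd : Differentiable ℝ f := diff_of_contDiff hf
  have hfj : ∀ j, ContDiff ℝ (⊤:ℕ∞) (pd j f) := contDiff_pd hf
  have hfjd : ∀ j, Differentiable ℝ (pd j f) := fun j => diff_of_contDiff (hfj j)
  have hfjkd : ∀ j k, Differentiable ℝ (pd j (pd k f)) :=
    fun j k => diff_of_contDiff (contDiff_pd (hfj k) j)
  have z00 : pd 0 (pd 0 f) = fun _ => (0:ℝ) := funext h00
  have z01 : pd 0 (pd 1 f) = fun _ => (0:ℝ) := funext h01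
  have z11 : pd 1 (pd 1 f) = fun _ => (0:ℝ) := funext h11
  have z22 : pd 2 (pd 2 f) = fun _ => (0:ℝ) := funext h22
  have key02 : ∀ x, pd 0 (pd 2 f) x = pd 0 (pd 2 f) 0 := by
    apply eq_of_pd_zero (hfjkd 0 2)
    refine all3 ?_ ?_ ?_
    · intro x; rw [pd_comm hf 0 2, pd_comm (hfj 0) 0 2, z00, pd_const]
    · intro x; rw [pd_comm hf 0 2, pd_comm (hfj 0) 1 2, pd_comm hf 1 0, z01, pd_const]
    · intro x; rw [pd_comm (hfj 2) 2 0, z22, pd_const]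
  have key12 : ∀ x, pd 1 (pd 2 f) x = pd 1 (pd 2 f) 0 := by
    apply eq_of_pd_zero (hfjkd 1 2)
    refine all3 ?_ ?_ ?_
    · intro x; rw [pd_comm hf 1 2, pd_comm (hfj 1) 0 2, z01, pd_const]
    · intro x; rw [pd_comm hf 1 2, pd_comm (hfj 1) 1 2, z11, pd_const]
    · intro x; rw [pd_comm (hfj 2) 2 1, z22, pd_const]
  set p0 := pd 0 f 0 with hp0; set p1 := pd 1 f 0 with hp1; set p2 := pd 2 f 0 with hp2
  set a := pd 0 (pd 2 f) 0 with ha; set c := pd 1 (pd 2 f) 0 with hc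
  -- first partials explicitly
  have df0 : ∀ x, pd 0 f x = p0 + a * x 2 := by
    have hg : ∀ x, pd 0 f x - a * x 2 = pd 0 f 0 - a * ((0:Fin 3 → ℝ) 2) := by
      apply eq_of_pd_zero ((hfjd 0).fun_sub (by fun_prop))
      refine all3 ?_ ?_ ?_ <;> intro x <;>
        rw [pd_sub (hfjd 0) (by fun_prop)] <;>
        simp (disch := fun_prop) only [pd_const_mul, pd_proj]
      · simp [h00 x, Pi.single_apply]
      · rw [pd_comm hf 1 0]; simp [h01 x, Pi.single_apply]
      · rw [pd_comm hf 2 0]; simp [key02 x, Pi.single_apply, ← ha]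
    intro x; have := hg x; simp at this; linarith
  have df1 : ∀ x, pd 1 f x = p1 + c * x 2 := by
    have hg : ∀ x, pd 1 f x - c * x 2 = pd 1 f 0 - c * ((0:Fin 3 → ℝ) 2) := by
      apply eq_of_pd_zero ((hfjd 1).fun_sub (by fun_prop))
      refine all3 ?_ ?_ ?_ <;> intro x <;>
        rw [pd_sub (hfjd 1) (by fun_prop)] <;>
        simp (disch := fun_prop) only [pd_const_mul, pd_proj]
      · simp [h01 x, Pi.single_apply]
      · simp [h11 x, Pi.single_apply]
      · rw [pd_comm hf 2 1]; simp [key12 x, Pi.single_apply, ← hc]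
    intro x; have := hg x; simp at this; linarith
  have df2 : ∀ x, pd 2 f x = p2 + a * x 0 + c * x 1 := by
    have hg : ∀ x, pd 2 f x - a * x 0 - c * x 1
        = pd 2 f 0 - a * ((0:Fin 3 → ℝ) 0) - c * ((0:Fin 3 → ℝ) 1) := by
      apply eq_of_pd_zero (((hfjd 2).fun_sub (by fun_prop)).fun_sub (by fun_prop))
      refine all3 ?_ ?_ ?_ <;> intro x <;>
        rw [pd_sub ((hfjd 2).fun_sub (by fun_prop)) (by fun_prop),
            pd_sub (hfjd 2) (by fun_prop)] <;>
        simp (disch := fun_prop) only [pd_const_mul, pd_proj]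
      · simp [key02 x, Pi.single_apply, ← ha]
      · simp [key12 x, Pi.single_apply, ← hc]
      · simp [h22 x, Pi.single_apply]
    intro x; have := hg x; simp at this; linarith
  -- now the function itself
  set q : (Fin 3 → ℝ) → ℝ := fun x => f 0 + p0 * x 0 + p1 * x 1 + p2 * x 2
      + a * (x 0 * x 2) + c * (x 1 * x 2) with hq
  have hqd : Differentiable ℝ q := by fun_prop
  have dq0 : pd 0 q = fun x => p0 + a * x 2 := by
    rw [hq]; simp (disch := fun_prop) only [pd_add, pd_const, pd_const_mul, pd_mul, pd_proj]
    funext x; simp [Pi.single_apply]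
  have dq1 : pd 1 q = fun x => p1 + c * x 2 := by
    rw [hq]; simp (disch := fun_prop) only [pd_add, pd_const, pd_const_mul, pd_mul, pd_proj]
    funext x; simp [Pi.single_apply]
  have dq2 : pd 2 q = fun x => p2 + a * x 0 + c * x 1 := by
    rw [hq]; simp (disch := fun_prop) only [pd_add, pd_const, pd_const_mul, pd_mul, pd_proj]
    funext x; simp [Pi.single_apply]
  have hdiff : ∀ x, f x - q x = f 0 - q 0 := by
    apply eq_of_pd_zero (hfd.fun_sub hqd)
    refine all3 ?_ ?_ ?_ <;> intro x <;> rw [pd_sub hfd hqd]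
    · rw [dq0]; simp [df0 x]
    · rw [dq1]; simp [df1 x]
    · rw [dq2]; simp [df2 x]
  intro x
  have h := hdiff x
  rw [hq] at h
  simp only [Pi.zero_apply] at h
  norm_num at h
  linarith

lemma rep2 {f : (Fin 3 → ℝ) → ℝ} (hf : ContDiff ℝ (⊤:ℕ∞) f)
    (h02 : ∀ x, pd 0 (pd 2 f) x = 0) (h12 : ∀ x, pd 1 (pd 2 f) x = 0)
    (h22 : ∀ x, pd 2 (pd 2 f) x = 0)
    (hlap : ∀ x, pd 0 (pd 0 f) x + pd 1 (pd 1 f) x = 0)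
    (h000 : ∀ x, pd 0 (pd 0 (pd 0 f)) x = 0)
    (h001 : ∀ x, pd 0 (pd 0 (pd 1 f)) x = 0)
    (h011 : ∀ x, pd 0 (pd 1 (pd 1 f)) x = 0)
    (h111 : ∀ x, pd 1 (pd 1 (pd 1 f)) x = 0) :
    ∀ x, f x = f 0 + pd 0 f 0 * x 0 + pd 1 f 0 * x 1 + pd 2 f 0 * x 2
      + pd 0 (pd 1 f) 0 * (x 0 * x 1) + (pd 1 (pd 1 f) 0 / 2) * (x 1 ^ 2 - x 0 ^ 2) := by
  have hfd : Differentiable ℝ f := diff_of_contDiff hf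
  have hfj : ∀ j, ContDiff ℝ (⊤:ℕ∞) (pd j f) := contDiff_pd hf
  have hfjd : ∀ j, Differentiable ℝ (pd j f) := fun j => diff_of_contDiff (hfj j)
  have hfjkd : ∀ j k, Differentiable ℝ (pd j (pd k f)) :=
    fun j k => diff_of_contDiff (contDiff_pd (hfj k) j)
  have z02 : pd 0 (pd 2 f) = fun _ => (0:ℝ) := funext h02
  have z12 : pd 1 (pd 2 f) = fun _ => (0:ℝ) := funext h12
  have z22 : pd 2 (pd 2 f) = fun _ => (0:ℝ) := funext h22
  -- constancy of the three in-plane second partials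
  have key01 : ∀ x, pd 0 (pd 1 f) x = pd 0 (pd 1 f) 0 := by
    apply eq_of_pd_zero (hfjkd 0 1)
    refine all3 ?_ ?_ ?_
    · exact h001
    · intro x; rw [pd_comm (hfj 1) 1 0]; exact h011 x
    · intro x; rw [pd_comm (hfj 1) 2 0, pd_comm hf 2 1, z12, pd_const]
  have key00 : ∀ x, pd 0 (pd 0 f) x = pd 0 (pd 0 f) 0 := by
    apply eq_of_pd_zero (hfjkd 0 0)
    refine all3 ?_ ?_ ?_
    · exact h000
    · intro x; rw [pd_comm (hfj 0) 1 0, pd_comm hf 1 0]; exact h001 x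
    · intro x; rw [pd_comm (hfj 0) 2 0, pd_comm hf 2 0, z02, pd_const]
  have key11 : ∀ x, pd 1 (pd 1 f) x = pd 1 (pd 1 f) 0 := by
    apply eq_of_pd_zero (hfjkd 1 1)
    refine all3 ?_ ?_ ?_
    · exact h011
    · exact h111
    · intro x; rw [pd_comm (hfj 1) 2 1, pd_comm hf 2 1, z12, pd_const]
  set p0 := pd 0 f 0 with hp0; set p1 := pd 1 f 0 with hp1; set p2 := pd 2 f 0 with hp2
  set c4 := pd 0 (pd 1 f) 0 with hc4; set t := pd 1 (pd 1 f) 0 with ht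
  set s := pd 0 (pd 0 f) 0 with hs
  have hst : s + t = 0 := hlap 0
  -- first partials explicitly
  have df2 : ∀ x, pd 2 f x = p2 := by
    intro x
    apply eq_of_pd_zero (hfjd 2)
    refine all3 h02 h12 h22
  have df0 : ∀ x, pd 0 f x = p0 + s * x 0 + c4 * x 1 := by
    have hg : ∀ x, pd 0 f x - s * x 0 - c4 * x 1
        = pd 0 f 0 - s * ((0:Fin 3 → ℝ) 0) - c4 * ((0:Fin 3 → ℝ) 1) := by
      apply eq_of_pd_zero (((hfjd 0).fun_sub (by fun_prop)).fun_sub (by fun_prop))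
      refine all3 ?_ ?_ ?_ <;> intro x <;>
        rw [pd_sub ((hfjd 0).fun_sub (by fun_prop)) (by fun_prop),
            pd_sub (hfjd 0) (by fun_prop)] <;>
        simp (disch := fun_prop) only [pd_const_mul, pd_proj]
      · simp [key00 x, Pi.single_apply, ← hs]
      · rw [pd_comm hf 1 0]; simp [key01 x, Pi.single_apply, ← hc4]
      · rw [pd_comm hf 2 0]; simp [h02 x, Pi.single_apply]
    intro x; have := hg x; simp at this; linarith
  have df1 : ∀ x, pd 1 f x = p1 + c4 * x 0 + t * x 1 := by
    have hg : ∀ x, pd 1 f x - c4 * x 0 - t * x 1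
        = pd 1 f 0 - c4 * ((0:Fin 3 → ℝ) 0) - t * ((0:Fin 3 → ℝ) 1) := by
      apply eq_of_pd_zero (((hfjd 1).fun_sub (by fun_prop)).fun_sub (by fun_prop))
      refine all3 ?_ ?_ ?_ <;> intro x <;>
        rw [pd_sub ((hfjd 1).fun_sub (by fun_prop)) (by fun_prop),
            pd_sub (hfjd 1) (by fun_prop)] <;>
        simp (disch := fun_prop) only [pd_const_mul, pd_proj]
      · simp [key01 x, Pi.single_apply, ← hc4]
      · simp [key11 x, Pi.single_apply, ← ht]
      · rw [pd_comm hf 2 1]; simp [h12 x, Pi.single_apply]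
    intro x; have := hg x; simp at this; linarith
  set q : (Fin 3 → ℝ) → ℝ := fun x => f 0 + p0 * x 0 + p1 * x 1 + p2 * x 2
      + c4 * (x 0 * x 1) + (t/2) * (x 1 * x 1) + (s/2) * (x 0 * x 0) with hq
  have hqd : Differentiable ℝ q := by fun_prop
  have dq0 : pd 0 q = fun x => p0 + s * x 0 + c4 * x 1 := by
    rw [hq]; simp (disch := fun_prop) only [pd_add, pd_const, pd_const_mul, pd_mul, pd_proj]
    funext x; simp [Pi.single_apply] <;> ring
  have dq1 : pd 1 q = fun x => p1 + c4 * x 0 + t * x 1 := by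
    rw [hq]; simp (disch := fun_prop) only [pd_add, pd_const, pd_const_mul, pd_mul, pd_proj]
    funext x; simp [Pi.single_apply] <;> ring
  have dq2 : pd 2 q = fun x => p2 := by
    rw [hq]; simp (disch := fun_prop) only [pd_add, pd_const, pd_const_mul, pd_mul, pd_proj]
    funext x; simp [Pi.single_apply]
  have hdiff : ∀ x, f x - q x = f 0 - q 0 := by
    apply eq_of_pd_zero (hfd.fun_sub hqd)
    refine all3 ?_ ?_ ?_ <;> intro x <;> rw [pd_sub hfd hqd]
    · rw [dq0]; simp only []; linarith [df0 x]
    · rw [dq1]; simp only []; linarith [df1 x]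
    · rw [dq2]; simp only []; linarith [df2 x]
  intro x
  have h := hdiff x
  rw [hq] at h
  simp only [Pi.zero_apply] at h
  norm_num at h
  have hts : s = -t := by linarith
  rw [hts] at h
  linear_combination h

set_option maxHeartbeats 2000000 in
/-- A smooth displacement field `u : ℝ³ → ℝ³` satisfies the tetragonal universality
constraints together with the additional strain-gradient constraints (all third-order
in-plane partials of `u₃` vanish) if and only if it is the superposition of a homogeneous
displacement field and `(c₁x₂x₃ + c₂x₁x₃, −c₂x₂x₃ + c₃x₁x₃, c₄x₁x₂ + c₅(x₂² − x₁²))`. -/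
theorem tetragonal_strain_gradient_universal_displacements
    (u : (Fin 3 → ℝ) → Fin 3 → ℝ) (hu : ContDiff ℝ (⊤ : ℕ∞) u) :
    ((∀ x, pdd 0 0 u 0 x = 0) ∧ (∀ x, pdd 0 1 u 0 x = 0) ∧
     (∀ x, pdd 1 1 u 0 x = 0) ∧ (∀ x, pdd 2 2 u 0 x = 0) ∧
     (∀ x, pdd 0 1 u 1 x = 0) ∧ (∀ x, pdd 1 1 u 1 x = 0) ∧
     (∀ x, pdd 0 0 u 1 x = 0) ∧ (∀ x, pdd 2 2 u 1 x = 0) ∧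
     (∀ x, pdd 0 2 u 0 x + pdd 1 2 u 1 x = 0) ∧
     (∀ x, pdd 0 2 u 2 x = 0) ∧ (∀ x, pdd 1 2 u 2 x = 0) ∧ (∀ x, pdd 2 2 u 2 x = 0) ∧
     (∀ x, pdd 0 0 u 2 x + pdd 1 1 u 2 x = 0) ∧
     (∀ x, pd 0 (pd 0 (pd 0 (comp u 2))) x = 0) ∧
     (∀ x, pd 0 (pd 0 (pd 1 (comp u 2))) x = 0) ∧
     (∀ x, pd 0 (pd 1 (pd 1 (comp u 2))) x = 0) ∧
     (∀ x, pd 1 (pd 1 (pd 1 (comp u 2))) x = 0)) ↔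
    ∃ (A : Matrix (Fin 3) (Fin 3) ℝ) (b : Fin 3 → ℝ) (c₁ c₂ c₃ c₄ c₅ : ℝ),
      ∀ x, u x = A.mulVec x + b +
        ![c₁ * (x 1 * x 2) + c₂ * (x 0 * x 2),
          -(c₂ * (x 1 * x 2)) + c₃ * (x 0 * x 2),
          c₄ * (x 0 * x 1) + c₅ * (x 1 ^ 2 - x 0 ^ 2)] := by
  constructor
  · rintro ⟨H1, H2, H3, H4, H5, H6, H7, H8, H9, H10, H11, H12, H13, H14, H15, H16, H17⟩
    have hc : ∀ i, ContDiff ℝ (⊤:ℕ∞) (comp u i) := fun i =>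
      (ContinuousLinearMap.proj (R := ℝ) (φ := fun _ : Fin 3 => ℝ) i).contDiff.comp hu
    have r0 := rep0 (hc 0) H1 H2 H3 H4
    have r1 := rep0 (hc 1) H7 H5 H6 H8
    have r2 := rep2 (hc 2) H10 H11 H12 H13 H14 H15 H16 H17
    have h9 : pd 1 (pd 2 (comp u 1)) 0 = -(pd 0 (pd 2 (comp u 0)) 0) := by
      have := H9 0; unfold pdd at this; linarith
    refine ⟨Matrix.of ![![pd 0 (comp u 0) 0, pd 1 (comp u 0) 0, pd 2 (comp u 0) 0],
                        ![pd 0 (comp u 1) 0, pd 1 (comp u 1) 0, pd 2 (comp u 1) 0],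
                        ![pd 0 (comp u 2) 0, pd 1 (comp u 2) 0, pd 2 (comp u 2) 0]],
        u 0, pd 1 (pd 2 (comp u 0)) 0, pd 0 (pd 2 (comp u 0)) 0, pd 0 (pd 2 (comp u 1)) 0,
        pd 0 (pd 1 (comp u 2)) 0, pd 1 (pd 1 (comp u 2)) 0 / 2, ?_⟩
    intro x
    funext i
    have hb : ∀ j : Fin 3, u 0 j = comp u j 0 := fun j => rfl
    fin_cases i
    · show u x 0 = _
      have : u x 0 = comp u 0 x := rfl
      rw [this, r0 x]
      simp [Matrix.mulVec, dotProduct, Fin.sum_univ_three, Matrix.vecHead, Matrix.vecTail, comp]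
      ring
    · show u x 1 = _
      have : u x 1 = comp u 1 x := rfl
      rw [this, r1 x, h9]
      simp [Matrix.mulVec, dotProduct, Fin.sum_univ_three, Matrix.vecHead, Matrix.vecTail, comp]
      ring
    · show u x 2 = _
      have : u x 2 = comp u 2 x := rfl
      rw [this, r2 x]
      simp [Matrix.mulVec, dotProduct, Fin.sum_univ_three, Matrix.vecHead, Matrix.vecTail, comp]
      ring
  · rintro ⟨A, b, c₁, c₂, c₃, c₄, c₅, hrep⟩
    have h0 : comp u 0 = (fun x => b 0 + A 0 0 * x 0 + A 0 1 * x 1 + A 0 2 * x 2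
        + c₂ * (x 0 * x 2) + c₁ * (x 1 * x 2)) := by
      funext x; simp [comp, hrep x, Matrix.mulVec, dotProduct, Fin.sum_univ_three]; ring
    have h1 : comp u 1 = (fun x => b 1 + A 1 0 * x 0 + A 1 1 * x 1 + A 1 2 * x 2
        + c₃ * (x 0 * x 2) - c₂ * (x 1 * x 2)) := by
      funext x; simp [comp, hrep x, Matrix.mulVec, dotProduct, Fin.sum_univ_three]; ring
    have h2 : comp u 2 = (fun x => b 2 + A 2 0 * x 0 + A 2 1 * x 1 + A 2 2 * x 2
        + c₄ * (x 0 * x 1) + c₅ * (x 1 * x 1) - c₅ * (x 0 * x 0)) := by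
      funext x; simp [comp, hrep x, Matrix.mulVec, dotProduct, Fin.sum_univ_three]; ring
    refine ⟨?_,?_,?_,?_,?_,?_,?_,?_,?_,?_,?_,?_,?_,?_,?_,?_,?_⟩ <;>
      (intro x; simp only [pdd, h0, h1, h2];
       simp (disch := fun_prop) only [pd_add, pd_sub, pd_const, pd_const_mul, pd_mul, pd_proj];
       simp [Pi.single_apply])
end

section
/- Let g : ℝ² → ℝ be smooth. Then ∂⁴g/∂x₁²∂x₂² = 0 identically on ℝ² if and only if there exist smooth functions f₁, f₂, f₃, f₄ : ℝ → ℝ such that g(x₁,x₂) = f₁(x₁) + x₂ f₂(x₁) + f₃(x₂) + x₁ f₄(x₂) for all (x₁,x₂) ∈ ℝ². (This is the structural decomposition underlying the universal displacement families of the strain-gradient classes ℤ₄ ⊕ ℤ₂ᶜ, 𝔻₄ ⊕ ℤ₂ᶜ, 𝕋, 𝕋 ⊕ ℤ₂ᶜ, 𝕆, 𝕆 ⊕ ℤ₂ᶜ and 𝕆⁻.) -/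
/-- Partial derivative of a scalar field on `ℝ²` in the `j`-th coordinate direction. -/
noncomputable def pd2 (j : Fin 2) (f : (Fin 2 → ℝ) → ℝ) : (Fin 2 → ℝ) → ℝ :=
  fun x => fderiv ℝ f x (Pi.single j 1)

lemma pd2_contDiff {f : (Fin 2 → ℝ) → ℝ} (hf : ContDiff ℝ (⊤:ℕ∞) f) (j : Fin 2) :
    ContDiff ℝ (⊤:ℕ∞) (pd2 j f) :=
  (hf.fderiv_right (by exact_mod_cast le_top)).clm_apply contDiff_const

lemma line0_eq (a b : ℝ) : ![a, b] = ![(0:ℝ), b] + a • (Pi.single 0 1 : Fin 2 → ℝ) := by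
  funext i; fin_cases i <;> simp

lemma line1_eq (a b : ℝ) : ![a, b] = ![a, (0:ℝ)] + b • (Pi.single 1 1 : Fin 2 → ℝ) := by
  funext i; fin_cases i <;> simp

lemma hasDerivAt_line (f : (Fin 2 → ℝ) → ℝ) (hf : Differentiable ℝ f)
    (c v : Fin 2 → ℝ) (t : ℝ) :
    HasDerivAt (fun s => f (c + s • v)) (fderiv ℝ f (c + t • v) v) t := by
  have h1 : HasDerivAt (fun s : ℝ => c + s • v) v t := by
    simpa using ((hasDerivAt_id t).smul_const v).const_add c
  exact ((hf (c + t • v)).hasFDerivAt).comp_hasDerivAt t h1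

lemma hasDerivAt_line0 {f : (Fin 2 → ℝ) → ℝ} (hf : Differentiable ℝ f) (a b : ℝ) :
    HasDerivAt (fun s => f ![s, b]) (pd2 0 f ![a, b]) a := by
  have := hasDerivAt_line f hf ![(0:ℝ), b] (Pi.single 0 1) a
  simp only [← line0_eq] at this
  exact this

lemma hasDerivAt_line1 {f : (Fin 2 → ℝ) → ℝ} (hf : Differentiable ℝ f) (a b : ℝ) :
    HasDerivAt (fun t => f ![a, t]) (pd2 1 f ![a, b]) b := by
  have := hasDerivAt_line f hf ![a, (0:ℝ)] (Pi.single 1 1) b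
  simp only [← line1_eq] at this
  exact this

lemma pd2_comm {f : (Fin 2 → ℝ) → ℝ} (hf : ContDiff ℝ (⊤:ℕ∞) f) (i j : Fin 2)
    (p : Fin 2 → ℝ) : pd2 i (pd2 j f) p = pd2 j (pd2 i f) p := by
  have hdf : ContDiff ℝ (⊤:ℕ∞) (fderiv ℝ f) := hf.fderiv_right (by exact_mod_cast le_top)
  have key : ∀ v w : Fin 2 → ℝ,
      fderiv ℝ (fun x => fderiv ℝ f x v) p w = fderiv ℝ (fderiv ℝ f) p w v := by
    intro v w
    have h : HasFDerivAt (fun x => fderiv ℝ f x v)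
        ((ContinuousLinearMap.apply ℝ ℝ v).comp (fderiv ℝ (fderiv ℝ f) p)) p :=
      (ContinuousLinearMap.apply ℝ ℝ v).hasFDerivAt.comp p
        (hdf.differentiable (by simp) p).hasFDerivAt
    rw [h.fderiv]; rfl
  have sym := second_derivative_symmetric (f := f) (f' := fderiv ℝ f)
      (f'' := fderiv ℝ (fderiv ℝ f) p)
      (fun y => ((hf.differentiable (by simp)) y).hasFDerivAt)
      ((hdf.differentiable (by simp)) p).hasFDerivAt
  show fderiv ℝ (fun x => fderiv ℝ f x (Pi.single j 1)) p (Pi.single i 1) =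
    fderiv ℝ (fun x => fderiv ℝ f x (Pi.single i 1)) p (Pi.single j 1)
  rw [key, key]
  exact sym _ _

lemma eq_affine_of_deriv2 {ψ ψ₁ : ℝ → ℝ} (h1 : ∀ t, HasDerivAt ψ (ψ₁ t) t)
    (h2 : ∀ t, HasDerivAt ψ₁ 0 t) (t : ℝ) : ψ t = ψ 0 + t * ψ₁ 0 := by
  have hc : ∀ s, ψ₁ s = ψ₁ 0 := fun s =>
    is_const_of_deriv_eq_zero (fun x => (h2 x).differentiableAt)
      (fun x => (h2 x).deriv) s 0
  have h3 : ∀ s, HasDerivAt (fun u => ψ u - u * ψ₁ 0) 0 s := by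
    intro s
    have := (h1 s).sub ((hasDerivAt_id s).mul_const (ψ₁ 0))
    exact this.congr_deriv (by simp [hc s])
  have := is_const_of_deriv_eq_zero (fun x => (h3 x).differentiableAt)
      (fun x => (h3 x).deriv) t 0
  linarith [this]

lemma contDiff_line0 : ContDiff ℝ (⊤:ℕ∞) (fun a : ℝ => ![a, (0:ℝ)]) := by
  apply contDiff_pi.2
  intro i
  fin_cases i <;> simp <;> [exact contDiff_id; exact contDiff_const]

lemma contDiff_line1 : ContDiff ℝ (⊤:ℕ∞) (fun b : ℝ => ![(0:ℝ), b]) := by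
  apply contDiff_pi.2
  intro i
  fin_cases i <;> simp <;> [exact contDiff_const; exact contDiff_id]

lemma pd2_eval {F : (Fin 2 → ℝ) → ℝ} {p : Fin 2 → ℝ} {L : (Fin 2 → ℝ) →L[ℝ] ℝ}
    (hF : HasFDerivAt F L p) (j : Fin 2) : pd2 j F p = L (Pi.single j 1) := by
  rw [pd2, hF.fderiv]

lemma contDiff_deriv {φ : ℝ → ℝ} (hφ : ContDiff ℝ (⊤:ℕ∞) φ) :
    ContDiff ℝ (⊤:ℕ∞) (deriv φ) := (contDiff_infty_iff_deriv.mp hφ).2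

lemma hasFDerivAt_comp_proj {φ : ℝ → ℝ} (hφ : Differentiable ℝ φ) (i : Fin 2)
    (p : Fin 2 → ℝ) :
    HasFDerivAt (fun q : Fin 2 → ℝ => φ (q i))
      ((deriv φ (p i)) • (ContinuousLinearMap.proj i : (Fin 2 → ℝ) →L[ℝ] ℝ)) p :=
  ((hφ (p i)).hasDerivAt).comp_hasFDerivAt p
    ((ContinuousLinearMap.proj i : (Fin 2 → ℝ) →L[ℝ] ℝ).hasFDerivAt)

lemma reverse_dir {f₁ f₂ f₃ f₄ : ℝ → ℝ}
    (h₁ : ContDiff ℝ (⊤:ℕ∞) f₁) (h₂ : ContDiff ℝ (⊤:ℕ∞) f₂)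
    (h₃ : ContDiff ℝ (⊤:ℕ∞) f₃) (h₄ : ContDiff ℝ (⊤:ℕ∞) f₄) (p : Fin 2 → ℝ) :
    pd2 0 (pd2 0 (pd2 1 (pd2 1
      (fun q => f₁ (q 0) + q 1 * f₂ (q 0) + f₃ (q 1) + q 0 * f₄ (q 1))))) p = 0 := by
  have d₁ : Differentiable ℝ f₁ := h₁.differentiable (by simp)
  have d₂ : Differentiable ℝ f₂ := h₂.differentiable (by simp)
  have d₃ : Differentiable ℝ f₃ := h₃.differentiable (by simp)
  have d₄ : Differentiable ℝ f₄ := h₄.differentiable (by simp)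
  have d₃' : Differentiable ℝ (deriv f₃) :=
    (contDiff_deriv h₃).differentiable (by simp)
  have d₄' : Differentiable ℝ (deriv f₄) :=
    (contDiff_deriv h₄).differentiable (by simp)
  have d₄'' : Differentiable ℝ (deriv (deriv f₄)) :=
    (contDiff_deriv (contDiff_deriv h₄)).differentiable (by simp)
  have e1 : pd2 1 (fun q => f₁ (q 0) + q 1 * f₂ (q 0) + f₃ (q 1) + q 0 * f₄ (q 1)) =
      fun q => f₂ (q 0) + deriv f₃ (q 1) + q 0 * deriv f₄ (q 1) := by
    funext q
    have hG : HasFDerivAt (fun q : Fin 2 → ℝ =>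
        f₁ (q 0) + q 1 * f₂ (q 0) + f₃ (q 1) + q 0 * f₄ (q 1)) _ q :=
      (((hasFDerivAt_comp_proj d₁ 0 q).add
        (((ContinuousLinearMap.proj 1 : (Fin 2 → ℝ) →L[ℝ] ℝ).hasFDerivAt).mul
          (hasFDerivAt_comp_proj d₂ 0 q))).add
        (hasFDerivAt_comp_proj d₃ 1 q)).add
        (((ContinuousLinearMap.proj 0 : (Fin 2 → ℝ) →L[ℝ] ℝ).hasFDerivAt).mul
          (hasFDerivAt_comp_proj d₄ 1 q))
    rw [pd2_eval hG 1]
    simp [Pi.single_apply]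
  have e2 : pd2 1 (fun q : Fin 2 → ℝ => f₂ (q 0) + deriv f₃ (q 1) + q 0 * deriv f₄ (q 1)) =
      fun q => deriv (deriv f₃) (q 1) + q 0 * deriv (deriv f₄) (q 1) := by
    funext q
    have hG : HasFDerivAt (fun q : Fin 2 → ℝ =>
        f₂ (q 0) + deriv f₃ (q 1) + q 0 * deriv f₄ (q 1)) _ q :=
      ((hasFDerivAt_comp_proj d₂ 0 q).add (hasFDerivAt_comp_proj d₃' 1 q)).add
        (((ContinuousLinearMap.proj 0 : (Fin 2 → ℝ) →L[ℝ] ℝ).hasFDerivAt).mul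
          (hasFDerivAt_comp_proj d₄' 1 q))
    rw [pd2_eval hG 1]
    simp [Pi.single_apply]
  have e3 : pd2 0 (fun q : Fin 2 → ℝ =>
      deriv (deriv f₃) (q 1) + q 0 * deriv (deriv f₄) (q 1)) =
      fun q => deriv (deriv f₄) (q 1) := by
    funext q
    have hG : HasFDerivAt (fun q : Fin 2 → ℝ =>
        deriv (deriv f₃) (q 1) + q 0 * deriv (deriv f₄) (q 1)) _ q :=
      (hasFDerivAt_comp_proj
        ((contDiff_deriv (contDiff_deriv h₃)).differentiable (by simp)) 1 q).add
        (((ContinuousLinearMap.proj 0 : (Fin 2 → ℝ) →L[ℝ] ℝ).hasFDerivAt).mul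
          (hasFDerivAt_comp_proj d₄'' 1 q))
    rw [pd2_eval hG 0]
    simp [Pi.single_apply]
  rw [e1, e2, e3]
  have hG : HasFDerivAt (fun q : Fin 2 → ℝ => deriv (deriv f₄) (q 1)) _ p :=
    hasFDerivAt_comp_proj d₄'' 1 p
  rw [pd2_eval hG 0]
  simp [Pi.single_apply]

lemma forward_dir {g : (Fin 2 → ℝ) → ℝ} (hg : ContDiff ℝ (⊤:ℕ∞) g)
    (hz : ∀ p, pd2 0 (pd2 0 (pd2 1 (pd2 1 g))) p = 0) (a b : ℝ) :
    g ![a, b] = g ![a,0] + b * pd2 1 g ![a,0]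
      + (g ![0,b] - g ![0,0] - b * pd2 1 g ![0,0])
      + a * (pd2 0 g ![0,b] - pd2 0 g ![0,0] - b * pd2 1 (pd2 0 g) ![0,0]) := by
  have hgd : Differentiable ℝ g := hg.differentiable (by simp)
  have h1 : ContDiff ℝ (⊤:ℕ∞) (pd2 1 g) := pd2_contDiff hg 1
  have h0 : ContDiff ℝ (⊤:ℕ∞) (pd2 0 g) := pd2_contDiff hg 0
  have h11 : ContDiff ℝ (⊤:ℕ∞) (pd2 1 (pd2 1 g)) := pd2_contDiff h1 1
  have h10 : ContDiff ℝ (⊤:ℕ∞) (pd2 1 (pd2 0 g)) := pd2_contDiff h0 1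
  have h011 : ContDiff ℝ (⊤:ℕ∞) (pd2 0 (pd2 1 (pd2 1 g))) := pd2_contDiff h11 0
  have h1d := h1.differentiable (by simp)
  have h0d := h0.differentiable (by simp)
  have h11d := h11.differentiable (by simp)
  have h10d := h10.differentiable (by simp)
  have h011d := h011.differentiable (by simp)
  -- step: affine in first variable of ∂₂²g
  have star : ∀ s t : ℝ, pd2 1 (pd2 1 g) ![s, t] =
      pd2 1 (pd2 1 g) ![0, t] + s * pd2 0 (pd2 1 (pd2 1 g)) ![0, t] := by
    intro s t
    exact eq_affine_of_deriv2 (ψ := fun s => pd2 1 (pd2 1 g) ![s, t])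
      (ψ₁ := fun s => pd2 0 (pd2 1 (pd2 1 g)) ![s, t])
      (fun s => hasDerivAt_line0 h11d s t)
      (fun s => by
        have := hasDerivAt_line0 h011d s t
        rwa [hz] at this) s
  -- commuting partials
  have comm : ∀ p : Fin 2 → ℝ,
      pd2 1 (pd2 1 (pd2 0 g)) p = pd2 0 (pd2 1 (pd2 1 g)) p := by
    intro p
    have hswap : pd2 1 (pd2 0 g) = pd2 0 (pd2 1 g) := funext fun q => pd2_comm hg 1 0 q
    calc pd2 1 (pd2 1 (pd2 0 g)) p = pd2 1 (pd2 0 (pd2 1 g)) p := by rw [hswap]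
      _ = pd2 0 (pd2 1 (pd2 1 g)) p := pd2_comm h1 1 0 p
  set ψ : ℝ → ℝ := fun t => g ![a,t] - g ![a,0] - t * pd2 1 g ![a,0]
      - (g ![0,t] - g ![0,0] - t * pd2 1 g ![0,0])
      - a * (pd2 0 g ![0,t] - pd2 0 g ![0,0] - t * pd2 1 (pd2 0 g) ![0,0]) with hψ
  set ψ₁ : ℝ → ℝ := fun t => pd2 1 g ![a,t] - pd2 1 g ![a,0]
      - (pd2 1 g ![0,t] - pd2 1 g ![0,0])
      - a * (pd2 1 (pd2 0 g) ![0,t] - pd2 1 (pd2 0 g) ![0,0]) with hψ₁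
  have hd1 : ∀ t, HasDerivAt ψ (ψ₁ t) t := by
    intro t
    have A := hasDerivAt_line1 hgd a t
    have C := hasDerivAt_line1 hgd 0 t
    have D := hasDerivAt_line1 h0d 0 t
    have B1 : HasDerivAt (fun t : ℝ => t * pd2 1 g ![a,0]) (pd2 1 g ![a,0]) t := by
      simpa using (hasDerivAt_id t).mul_const (pd2 1 g ![a,0])
    have B2 : HasDerivAt (fun t : ℝ => t * pd2 1 g ![0,0]) (pd2 1 g ![0,0]) t := by
      simpa using (hasDerivAt_id t).mul_const (pd2 1 g ![0,0])
    have B3 : HasDerivAt (fun t : ℝ => t * pd2 1 (pd2 0 g) ![0,0])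
        (pd2 1 (pd2 0 g) ![0,0]) t := by
      simpa using (hasDerivAt_id t).mul_const (pd2 1 (pd2 0 g) ![0,0])
    have := (((A.sub_const (g ![a,0])).sub B1).sub
        (((C.sub_const (g ![0,0])).sub B2))).sub
        ((((D.sub_const (pd2 0 g ![0,0])).sub B3)).const_mul a)
    exact this
  have hd2 : ∀ t, HasDerivAt ψ₁ 0 t := by
    intro t
    have A := hasDerivAt_line1 h1d a t
    have C := hasDerivAt_line1 h1d 0 t
    have D := hasDerivAt_line1 h10d 0 t
    have := (((A.sub_const (pd2 1 g ![a,0])).sub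
        ((C.sub_const (pd2 1 g ![0,0])))).sub
        (((D.sub_const (pd2 1 (pd2 0 g) ![0,0]))).const_mul a))
    refine this.congr_deriv ?_
    rw [comm ![0,t]]
    have := star a t
    linarith
  have key := eq_affine_of_deriv2 hd1 hd2 b
  have hψ0 : ψ 0 = 0 := by simp [hψ]
  have hψ₁0 : ψ₁ 0 = 0 := by simp [hψ₁]
  rw [hψ0, hψ₁0] at key
  simp only [hψ] at key
  linarith

/-- A smooth function `g : ℝ² → ℝ` satisfies `∂⁴g/∂x₁²∂x₂² = 0` identically if and only
if `g(x₁,x₂) = f₁(x₁) + x₂f₂(x₁) + f₃(x₂) + x₁f₄(x₂)` for smooth functions `f₁,…,f₄`. -/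
theorem mixed_quartic_vanishing_decomposition
    (g : (Fin 2 → ℝ) → ℝ) (hg : ContDiff ℝ (⊤ : ℕ∞) g) :
    (∀ p, pd2 0 (pd2 0 (pd2 1 (pd2 1 g))) p = 0) ↔
    ∃ f₁ f₂ f₃ f₄ : ℝ → ℝ,
      ContDiff ℝ (⊤ : ℕ∞) f₁ ∧ ContDiff ℝ (⊤ : ℕ∞) f₂ ∧
      ContDiff ℝ (⊤ : ℕ∞) f₃ ∧ ContDiff ℝ (⊤ : ℕ∞) f₄ ∧
      ∀ p : Fin 2 → ℝ, g p = f₁ (p 0) + p 1 * f₂ (p 0) + f₃ (p 1) + p 0 * f₄ (p 1) := by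
  constructor
  · intro hz
    refine ⟨fun a => g ![a,0], fun a => pd2 1 g ![a,0],
      fun b => g ![0,b] - g ![0,0] - b * pd2 1 g ![0,0],
      fun b => pd2 0 g ![0,b] - pd2 0 g ![0,0] - b * pd2 1 (pd2 0 g) ![0,0],
      hg.comp contDiff_line0, (pd2_contDiff hg 1).comp contDiff_line0,
      ((hg.comp contDiff_line1).sub contDiff_const).sub (contDiff_id.mul contDiff_const),
      (((pd2_contDiff hg 0).comp contDiff_line1).sub contDiff_const).sub
        (contDiff_id.mul contDiff_const), ?_⟩
    intro p
    have hp : ![p 0, p 1] = p := by funext i; fin_cases i <;> rfl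
    have := forward_dir hg hz (p 0) (p 1)
    rw [hp] at this
    simpa using this
  · rintro ⟨f₁, f₂, f₃, f₄, h₁, h₂, h₃, h₄, hid⟩
    have hgf : g = fun q => f₁ (q 0) + q 1 * f₂ (q 0) + f₃ (q 1) + q 0 * f₄ (q 1) :=
      funext hid
    rw [hgf]
    exact reverse_dir h₁ h₂ h₃ h₄
end
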